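/- Let B ∈ (0,1) solve equation (B) and let A ∈ (0,1) solve equation (A) with this B. Then c₁·(1-A) ≤ 2c₀; consequently, for every x ∈ (A,1), -c₁(1-x)/2 ≥ -c₀ (so that LU ≥ -c₀ on (A,1) for the function U of the switching problem). -/
import Mathlib


/-- Let `B ∈ (0,1)` solve equation (B) and let `A ∈ (0,1)` solve
equation (A) with this `B`. Then `c₁(1-A) ≤ 2c₀`; consequently, for every `x ∈ (A,1)`,
`-c₁(1-x)/2 ≥ -c₀`. -/
theorem c₁_one_sub_A_le (μ c₀ c₁ c₂ : ℝ) (hμ : 0 < μ) (hc₀ : 0 < c₀) (hc₁ : 0 < c₁)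
    (hc₂ : 0 < c₂) (A B : ℝ) (hB : B ∈ Set.Ioo (0 : ℝ) 1)
    (hBeq : Real.log ((1 - B) / (1 + B)) + 2 * B / (1 - B ^ 2) = 2 * μ ^ 2 * c₂ / c₁)
    (hA : A ∈ Set.Ioo (0 : ℝ) 1)
    (hAeq : (c₁ / (2 * c₀) - 1) * Real.log ((1 - A) / (1 + A))
        + (2 / (1 + A)) * (c₁ / (2 * c₀) + A / (1 - A)) = c₁ / (c₀ * (1 - B ^ 2))) :
    c₁ * (1 - A) ≤ 2 * c₀ ∧ ∀ x ∈ Set.Ioo A 1, -(c₁ * (1 - x)) / 2 ≥ -c₀ := by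
  obtain ⟨hA0, hA1⟩ := hA
  obtain ⟨hB0, hB1⟩ := hB
  have hBsq : 0 < 1 - B ^ 2 := by nlinarith
  have hBsq1 : 1 - B ^ 2 < 1 := by nlinarith
  have h1A : 0 < 1 - A := by linarith
  have h1A' : 0 < 1 + A := by linarith
  have hL : Real.log ((1 - A) / (1 + A)) < 0 := by
    apply Real.log_neg (by positivity)
    rw [div_lt_one h1A']; linarith
  set L := Real.log ((1 - A) / (1 + A)) with hLdef
  have hmain : c₁ * (1 - A) ≤ 2 * c₀ := by
    by_contra hcon
    push_neg at hcon
    have hd : 0 < c₁ - 2 * c₀ := by nlinarith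
    have h := hAeq
    field_simp at h
    have hneg : c₀ ^ 2 * ((1 - B ^ 2) * ((1 - A) * (1 + A) * (c₁ - 2 * c₀))) * L < 0 :=
      mul_neg_of_pos_of_neg (by positivity) hL
    have hpos : 0 < c₀ ^ 2 * (B ^ 2 * (c₁ * (1 - A) + 2 * c₀ * A)) := by
      have hB2 : 0 < B ^ 2 := pow_pos hB0 2
      have : 0 < c₁ * (1 - A) + 2 * c₀ * A := by positivity
      positivity
    have hlast : 0 < c₀ ^ 2 * (A * (c₁ * (1 - A) - 2 * c₀)) := by
      have : 0 < c₁ * (1 - A) - 2 * c₀ := by linarith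
      positivity
    nlinarith [h, hneg, hpos, hlast]
  refine ⟨hmain, fun x hx => ?_⟩
  obtain ⟨hx1, hx2⟩ := hx
  have : c₁ * (1 - x) ≤ c₁ * (1 - A) := by nlinarith
  linarith
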